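/- Let n ≥ 1 and N ≥ 1 be integers, and let φ, ψ : ℝ^n → ℂ be C^∞ functions with compact support such that ∫ x^α φ(x) dx = 0 and ∫ x^α ψ(x) dx = 0 for every multi-index α with |α| ≤ N. For j ∈ ℤ, k ∈ ℤ^n write φ_{j,k}(x) = 2^{nj/2} φ(2^j x − k) and likewise ψ_{j',k'}(x) = 2^{nj'/2} ψ(2^{j'} x − k'). Then there is a constant C_N > 0 such that for all j, j' ∈ ℤ and all k, k' ∈ ℤ^n, |∫_{ℝ^n} φ_{j,k}(x) conj(ψ_{j',k'}(x)) dx| ≤ C_N · 2^{−|j−j'|(n/2+N)} · ( (2^{−j}+2^{−j'}) / (2^{−j}+2^{−j'}+|2^{−j}k−2^{−j'}k'|) )^{n+N}. -/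

import Mathlib

noncomputable section

open MeasureTheory Real Complex
open scoped ENNReal NNReal

/-- `ℝⁿ` modeled as functions `Fin n → ℝ`. -/
abbrev Vec (n : ℕ) : Type := Fin n → ℝ

/-- Integer lattice `ℤⁿ`. -/
abbrev IVec (n : ℕ) : Type := Fin n → ℤ

/-- The index set `E_n = {0,1}ⁿ \ {0}`, with `{0,1}ⁿ` modeled as `Fin n → Bool`. -/
abbrev En (n : ℕ) : Type := {ε : Fin n → Bool // ε ≠ fun _ => false}

/-- The Euclidean norm on `Vec n`. -/
def enorm2 {n : ℕ} (x : Vec n) : ℝ := Real.sqrt (∑ i, (x i) ^ 2)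

/-- `f_{j,k}(x) = 2^{nj/2} f(2^j x − k)`. -/
def scaleJK {n : ℕ} (f : Vec n → ℂ) (j : ℤ) (k : IVec n) : Vec n → ℂ :=
  fun x => (((2 : ℝ) ^ ((n : ℝ) * (j : ℝ) / 2) : ℝ) : ℂ) *
    f (fun i => (2 : ℝ) ^ j * x i - (k i : ℝ))

/-!
Assume `j' ≤ j` (the other case follows by conjugation). The substitution `y = 2^j x - k` turns
the inner product into `2^{n(j'-j)/2} ∫ φ(y) conj ψ(t y + c) dy` with `t = 2^{j'-j} ≤ 1`. The
vanishing moments of `φ` annihilate the Taylor polynomial of degree `N` of `conj ψ` at `c`, and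
Taylor's theorem bounds the remainder by `O(t^{N+1}) ≤ O(t^N)`, which gives the factor
`2^{-|j-j'|(n/2+N)}`. The localisation factor only costs a constant: if the supports of the two
rescaled functions meet, then `|2^{-j}k - 2^{-j'}k'| ≤ √n R (2^{-j} + 2^{-j'})`, where `R` bounds
the supports of `φ` and `ψ`.
-/

open scoped ComplexConjugate

def HasVanishingMoments {n : ℕ} (N : ℕ) (φ : Vec n → ℂ) : Prop :=
  ∀ α : Fin n → ℕ, (∑ i, α i) ≤ N → (∫ x : Vec n, ((∏ i, (x i) ^ (α i) : ℝ) : ℂ) * φ x) = 0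

section Taylor

variable {E F : Type*} [NormedAddCommGroup E] [NormedSpace ℝ E]
  [NormedAddCommGroup F] [NormedSpace ℝ F]

theorem iteratedDeriv_comp_add_smul {g : E → F} {N : ℕ} (hg : ContDiff ℝ N g) (x v : E)
    {m : ℕ} (hm : m ≤ N) (s : ℝ) :
    iteratedDeriv m (fun s : ℝ => g (x + s • v)) s =
      iteratedFDeriv ℝ m g (x + s • v) (fun _ => v) := by
  have hline : (fun s : ℝ => g (x + s • v)) =
      (fun z => g (x + z)) ∘ ContinuousLinearMap.toSpanSingleton ℝ v := rfl
  rw [iteratedDeriv_eq_iteratedFDeriv, hline,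
    ContinuousLinearMap.iteratedFDeriv_comp_right (f := fun z => g (x + z)) _
      (hg.comp (contDiff_const.add contDiff_id)) _ (mod_cast hm),
    iteratedFDeriv_comp_add_left]
  simp

theorem norm_add_sub_sum_iteratedFDeriv_le {g : E → F} {N : ℕ} (hg : ContDiff ℝ (N + 1) g)
    {M : ℝ} (hM : ∀ z, ‖iteratedFDeriv ℝ (N + 1) g z‖ ≤ M) (x v : E) :
    ‖g (x + v) - ∑ m ∈ Finset.range (N + 1),
        (m.factorial : ℝ)⁻¹ • iteratedFDeriv ℝ m g x (fun _ => v)‖ ≤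
      M * ‖v‖ ^ (N + 1) / N.factorial := by
  set G : ℝ → F := fun s => g (x + s • v)
  have hG : ContDiff ℝ (N + 1) G :=
    hg.comp (contDiff_const.add (contDiff_id.smul contDiff_const))
  have hIcc : UniqueDiffOn ℝ (Set.Icc (0 : ℝ) 1) := uniqueDiffOn_Icc zero_lt_one
  have hderiv : ∀ m ≤ N + 1, ∀ s ∈ Set.Icc (0 : ℝ) 1,
      iteratedDerivWithin m G (Set.Icc 0 1) s =
        iteratedFDeriv ℝ m g (x + s • v) (fun _ => v) := fun m hm s hs => by
    rw [iteratedDerivWithin_eq_iteratedDeriv hIcc (hG.contDiffAt.of_le (mod_cast hm)) hs,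
      iteratedDeriv_comp_add_smul hg x v hm]
  have hbound : ∀ s ∈ Set.Icc (0 : ℝ) 1,
      ‖iteratedDerivWithin (N + 1) G (Set.Icc 0 1) s‖ ≤ M * ‖v‖ ^ (N + 1) := fun s hs => by
    rw [hderiv _ le_rfl s hs]
    calc _ ≤ ‖iteratedFDeriv ℝ (N + 1) g (x + s • v)‖ * ∏ _ : Fin (N + 1), ‖v‖ :=
          ContinuousMultilinearMap.le_opNorm _ _
      _ ≤ M * ‖v‖ ^ (N + 1) := by
          rw [Finset.prod_const, Finset.card_univ, Fintype.card_fin]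
          gcongr
          exact hM _
  have htaylor : taylorWithinEval G N (Set.Icc 0 1) 0 1 = ∑ m ∈ Finset.range (N + 1),
      (m.factorial : ℝ)⁻¹ • iteratedFDeriv ℝ m g x (fun _ => v) := by
    rw [taylor_within_apply]
    refine Finset.sum_congr rfl fun m hm => ?_
    rw [hderiv m (by simp at hm; omega) 0 ⟨le_rfl, zero_le_one⟩]
    simp
  simpa [G, htaylor] using taylor_mean_remainder_bound zero_le_one hG.contDiffOn
    ⟨zero_le_one, le_rfl⟩ hbound

end Taylor

theorem ContinuousMultilinearMap.apply_diag_eq_sum {n m : ℕ} {F : Type*} [NormedAddCommGroup F]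
    [NormedSpace ℝ F] (T : ContinuousMultilinearMap ℝ (fun _ : Fin m => Fin n → ℝ) F)
    (w : Fin n → ℝ) :
    T (fun _ => w) = ∑ d : Fin m → Fin n, (∏ j, w (d j)) • T (fun j => Pi.single (d j) 1) := by
  classical
  conv_lhs => rw [← Finset.univ_sum_single w]
  simp_rw [show ∀ i, Pi.single i (w i) = w i • (Pi.single i 1 : Fin n → ℝ) from fun i => by
    rw [← Pi.single_smul', smul_eq_mul, mul_one], T.map_sum, T.map_smul_univ]

namespace HasVanishingMoments

variable {n N : ℕ} {φ : Vec n → ℂ}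

theorem integral_prod_mul_eq_zero (hφm : HasVanishingMoments N φ) {m : ℕ} (hm : m ≤ N)
    (d : Fin m → Fin n) :
    ∫ y : Vec n, ((∏ j, y (d j) : ℝ) : ℂ) * φ y = 0 := by
  classical
  set α : Fin n → ℕ := fun i => (Finset.univ.filter fun j => d j = i).card
  have hsum : ∑ i, α i = m := by
    simp [α, ← Finset.card_eq_sum_card_fiberwise (fun j _ => Finset.mem_univ (d j))]
  have hprod : ∀ y : Vec n, ∏ j, y (d j) = ∏ i, y i ^ α i := fun y => by
    rw [← Finset.prod_fiberwise_of_maps_to (fun j _ => Finset.mem_univ (d j))]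
    refine Finset.prod_congr rfl fun i _ => ?_
    rw [Finset.prod_congr rfl fun j hj => by rw [(Finset.mem_filter.1 hj).2], Finset.prod_const]
  simp_rw [hprod]
  exact hφm α (hsum ▸ hm)

theorem integral_mul_multilinear_diag_eq_zero (hφm : HasVanishingMoments N φ)
    (hφ : Continuous φ) (hφc : HasCompactSupport φ) {m : ℕ} (hm : m ≤ N)
    (T : ContinuousMultilinearMap ℝ (fun _ : Fin m => Vec n) ℂ) :
    ∫ y : Vec n, φ y * T (fun _ => y) = 0 := by
  have hint : ∀ d : Fin m → Fin n,
      Integrable (fun y : Vec n => ((∏ j, y (d j) : ℝ) : ℂ) * φ y) := fun d =>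
    ((continuous_ofReal.comp (continuous_finsetProd _ fun j _ => continuous_apply (d j))).mul
      hφ).integrable_of_hasCompactSupport hφc.mul_left
  have hexpand : ∀ y : Vec n, φ y * T (fun _ => y) = ∑ d : Fin m → Fin n,
      T (fun j => Pi.single (d j) 1) * (((∏ j, y (d j) : ℝ) : ℂ) * φ y) := fun y => by
    rw [T.apply_diag_eq_sum, Finset.mul_sum]
    refine Finset.sum_congr rfl fun d _ => ?_
    rw [Complex.real_smul]
    ring
  simp_rw [hexpand]
  rw [integral_finsetSum _ fun d _ => (hint d).const_mul _]
  exact Finset.sum_eq_zero fun d _ => by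
    rw [integral_const_mul, hφm.integral_prod_mul_eq_zero hm d, mul_zero]

theorem exists_norm_integral_mul_comp_smul_add_le (hφm : HasVanishingMoments N φ)
    (hφ : Continuous φ) (hφc : HasCompactSupport φ) {g : Vec n → ℂ}
    (hg : ContDiff ℝ (N + 1) g) (hgc : HasCompactSupport g) :
    ∃ C, 0 < C ∧ ∀ (t : ℝ) (c : Vec n), ‖∫ y, φ y * g (t • y + c)‖ ≤ C * |t| ^ (N + 1) := by
  obtain ⟨M, hM⟩ := (hgc.iteratedFDeriv (N + 1)).exists_bound_of_continuous
    (hg.continuous_iteratedFDeriv le_rfl)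
  have hM0 : 0 ≤ M := (norm_nonneg _).trans (hM 0)
  set K := ∫ y : Vec n, ‖φ y‖ * ‖y‖ ^ (N + 1)
  have hK : Integrable (fun y : Vec n => ‖φ y‖ * ‖y‖ ^ (N + 1)) :=
    (hφ.norm.mul (continuous_norm.pow _)).integrable_of_hasCompactSupport hφc.norm.mul_right
  have hK0 : 0 ≤ K := integral_nonneg fun y => by positivity
  refine ⟨M * K / N.factorial + 1, by positivity, fun t c => ?_⟩
  -- `T m (fun _ => y)` is the degree-`m` Taylor term of `g` at `c`, evaluated at `t • y`
  set T : (m : ℕ) → ContinuousMultilinearMap ℝ (fun _ : Fin m => Vec n) ℂ := fun m =>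
    (m.factorial : ℝ)⁻¹ • (iteratedFDeriv ℝ m g c).compContinuousLinearMap
      fun _ => t • ContinuousLinearMap.id ℝ (Vec n)
  set P : Vec n → ℂ := fun y => ∑ m ∈ Finset.range (N + 1), T m (fun _ => y)
  have hTint : ∀ m, Integrable fun y : Vec n => φ y * T m (fun _ => y) := fun m =>
    (hφ.mul ((T m).cont.comp (continuous_pi fun _ => continuous_id))
      ).integrable_of_hasCompactSupport hφc.mul_right
  have hPint : Integrable fun y => φ y * P y := by
    simpa only [P, Finset.mul_sum] using integrable_finsetSum _ fun m _ => hTint m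
  have hgint : Integrable fun y : Vec n => φ y * g (t • y + c) :=
    (hφ.mul (hg.continuous.comp (by fun_prop))).integrable_of_hasCompactSupport hφc.mul_right
  have hvanish : ∫ y, φ y * P y = 0 := by
    simp_rw [P, Finset.mul_sum]
    rw [integral_finsetSum _ fun m _ => hTint m]
    exact Finset.sum_eq_zero fun m hm =>
      hφm.integral_mul_multilinear_diag_eq_zero hφ hφc (by simp at hm; omega) _
  have hremainder : ∀ y, ‖φ y * (g (t • y + c) - P y)‖ ≤
      M * |t| ^ (N + 1) / N.factorial * (‖φ y‖ * ‖y‖ ^ (N + 1)) := fun y => by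
    have hTaylor := norm_add_sub_sum_iteratedFDeriv_le hg hM c (t • y)
    rw [add_comm c, norm_smul, Real.norm_eq_abs, mul_pow] at hTaylor
    have hP : P y = ∑ m ∈ Finset.range (N + 1),
        (m.factorial : ℝ)⁻¹ • iteratedFDeriv ℝ m g c (fun _ => t • y) := by
      simp [P, T]
    rw [norm_mul, hP]
    calc _ ≤ ‖φ y‖ * (M * (|t| ^ (N + 1) * ‖y‖ ^ (N + 1)) / N.factorial) := by gcongr
      _ = _ := by ring
  calc ‖∫ y, φ y * g (t • y + c)‖ = ‖∫ y, φ y * (g (t • y + c) - P y)‖ := by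
        simp_rw [mul_sub]
        rw [integral_sub hgint hPint, hvanish, sub_zero]
    _ ≤ ∫ y, M * |t| ^ (N + 1) / N.factorial * (‖φ y‖ * ‖y‖ ^ (N + 1)) :=
        norm_integral_le_of_norm_le (hK.const_mul _) (.of_forall hremainder)
    _ = M * K / N.factorial * |t| ^ (N + 1) := by rw [integral_const_mul]; ring
    _ ≤ (M * K / N.factorial + 1) * |t| ^ (N + 1) := by gcongr; linarith

end HasVanishingMoments

theorem integral_comp_smul_sub {n : ℕ} {E : Type*} [NormedAddCommGroup E] [NormedSpace ℝ E]
    (F : Vec n → E) (a : ℝ) (b : Vec n) :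
    ∫ x : Vec n, F (a • x - b) = |(a ^ n)⁻¹| • ∫ y, F y := by
  simpa [Module.finrank_fintype_fun_eq_card, integral_sub_right_eq_self] using
    Measure.integral_comp_smul volume (fun z : Vec n => F (z - b)) a

theorem integral_scaleJK_mul_conj_scaleJK {n : ℕ} (φ ψ : Vec n → ℂ) (j j' : ℤ)
    (k k' : IVec n) :
    ∫ x, scaleJK φ j k x * conj (scaleJK ψ j' k' x) =
      (((2 : ℝ) ^ ((n : ℝ) * (j' - j) / 2) : ℝ) : ℂ) * ∫ y, φ y *
        conj (ψ ((2 : ℝ) ^ (j' - j) • y + fun i => (2 : ℝ) ^ (j' - j) * k i - k' i)) := by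
  set t : ℝ := (2 : ℝ) ^ (j' - j)
  set c : Vec n := fun i => t * k i - k' i
  set A : ℝ := (2 : ℝ) ^ ((n : ℝ) * j / 2) * (2 : ℝ) ^ ((n : ℝ) * j' / 2) with hA
  have hsubst : ∀ x : Vec n, scaleJK φ j k x * conj (scaleJK ψ j' k' x) =
      A * (φ ((2 : ℝ) ^ j • x - fun i => (k i : ℝ)) *
        conj (ψ (t • ((2 : ℝ) ^ j • x - fun i => (k i : ℝ)) + c))) := fun x => by
    have harg : (fun i => (2 : ℝ) ^ j' * x i - k' i) =
        t • ((2 : ℝ) ^ j • x - fun i => (k i : ℝ)) + c := by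
      funext i
      simp only [Pi.add_apply, Pi.smul_apply, Pi.sub_apply, smul_eq_mul, t, c]
      rw [mul_sub, ← mul_assoc, ← zpow_add₀ two_ne_zero, sub_add_cancel]
      ring
    have harg₀ : (fun i => (2 : ℝ) ^ j * x i - k i) = (2 : ℝ) ^ j • x - fun i => (k i : ℝ) :=
      rfl
    simp only [scaleJK, harg₀, harg, map_mul, conj_ofReal, A, ofReal_mul]
    ring
  have hconst : |(((2 : ℝ) ^ j) ^ n)⁻¹| * A = (2 : ℝ) ^ ((n : ℝ) * (j' - j) / 2) := by
    rw [abs_of_pos (by positivity), ← Real.rpow_intCast, ← Real.rpow_natCast,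
      ← Real.rpow_mul two_pos.le, ← Real.rpow_neg two_pos.le, hA, ← mul_assoc,
      ← Real.rpow_add two_pos, ← Real.rpow_add two_pos]
    congr 1
    ring
  rw [integral_congr_ae (.of_forall hsubst),
    integral_comp_smul_sub (fun y => (A : ℂ) * (φ y * conj (ψ (t • y + c)))),
    integral_const_mul, real_smul, ← mul_assoc, ← ofReal_mul, hconst]

theorem exists_norm_integral_scaleJK_le_of_le {n N : ℕ} {φ ψ : Vec n → ℂ}
    (hφm : HasVanishingMoments N φ) (hφ : Continuous φ) (hφc : HasCompactSupport φ)
    (hψ : ContDiff ℝ (N + 1) ψ) (hψc : HasCompactSupport ψ) :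
    ∃ C, 0 < C ∧ ∀ (j j' : ℤ) (k k' : IVec n), j' ≤ j →
      ‖∫ x, scaleJK φ j k x * conj (scaleJK ψ j' k' x)‖ ≤
        C * (2 : ℝ) ^ (-(((|j - j'| : ℤ) : ℝ)) * ((n : ℝ) / 2 + (N : ℝ))) := by
  obtain ⟨C, hC, hbound⟩ := hφm.exists_norm_integral_mul_comp_smul_add_le hφ hφc
    (conjCLE.contDiff.comp hψ) (hψc.comp_left (map_zero _))
  refine ⟨C, hC, fun j j' k k' hj => ?_⟩
  have hexp : (2 : ℝ) ^ ((n : ℝ) * (j' - j) / 2) * ((2 : ℝ) ^ (j' - j)) ^ N =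
      (2 : ℝ) ^ (-(((|j - j'| : ℤ) : ℝ)) * ((n : ℝ) / 2 + (N : ℝ))) := by
    rw [← Real.rpow_intCast, ← Real.rpow_natCast, ← Real.rpow_mul two_pos.le,
      ← Real.rpow_add two_pos, abs_of_nonneg (sub_nonneg.2 hj)]
    congr 1
    push_cast
    ring
  set t : ℝ := (2 : ℝ) ^ (j' - j)
  have ht : 0 < t := by positivity
  have ht1 : t ≤ 1 := zpow_le_one_of_nonpos₀ one_le_two (sub_nonpos.2 hj)
  rw [integral_scaleJK_mul_conj_scaleJK, norm_mul, norm_real,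
    Real.norm_of_nonneg (by positivity)]
  calc _ ≤ (2 : ℝ) ^ ((n : ℝ) * (j' - j) / 2) * (C * |t| ^ (N + 1)) := by
        gcongr
        exact hbound t _
    _ ≤ (2 : ℝ) ^ ((n : ℝ) * (j' - j) / 2) * (C * t ^ N) := by
        rw [abs_of_pos ht]
        gcongr _ * (_ * ?_)
        exact pow_le_pow_of_le_one ht.le ht1 N.le_succ
    _ = _ := by rw [← hexp]; ring

theorem norm_integral_scaleJK_mul_conj_comm {n : ℕ} (φ ψ : Vec n → ℂ) (j j' : ℤ)
    (k k' : IVec n) :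
    ‖∫ x, scaleJK φ j k x * conj (scaleJK ψ j' k' x)‖ =
      ‖∫ x, scaleJK ψ j' k' x * conj (scaleJK φ j k x)‖ := by
  rw [← RCLike.norm_conj, ← integral_conj]
  simp_rw [map_mul, conj_conj, mul_comm]

theorem exists_norm_integral_scaleJK_le {n N : ℕ} {φ ψ : Vec n → ℂ}
    (hφ : ContDiff ℝ (N + 1) φ) (hφc : HasCompactSupport φ) (hφm : HasVanishingMoments N φ)
    (hψ : ContDiff ℝ (N + 1) ψ) (hψc : HasCompactSupport ψ) (hψm : HasVanishingMoments N ψ) :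
    ∃ C, 0 < C ∧ ∀ (j j' : ℤ) (k k' : IVec n),
      ‖∫ x, scaleJK φ j k x * conj (scaleJK ψ j' k' x)‖ ≤
        C * (2 : ℝ) ^ (-(((|j - j'| : ℤ) : ℝ)) * ((n : ℝ) / 2 + (N : ℝ))) := by
  obtain ⟨C₁, hC₁, h₁⟩ := exists_norm_integral_scaleJK_le_of_le hφm hφ.continuous hφc hψ hψc
  obtain ⟨C₂, -, h₂⟩ := exists_norm_integral_scaleJK_le_of_le hψm hψ.continuous hψc hφ hφc
  refine ⟨max C₁ C₂, lt_max_of_lt_left hC₁, fun j j' k k' => ?_⟩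
  rcases le_total j' j with hj | hj
  · exact (h₁ j j' k k' hj).trans (by gcongr; exact le_max_left _ _)
  · rw [norm_integral_scaleJK_mul_conj_comm, abs_sub_comm]
    exact (h₂ j' j k' k hj).trans (by gcongr; exact le_max_right _ _)

theorem enorm2_nonneg {n : ℕ} (x : Vec n) : 0 ≤ enorm2 x := Real.sqrt_nonneg _

theorem enorm2_le_sqrt_mul_norm {n : ℕ} (x : Vec n) : enorm2 x ≤ √n * ‖x‖ := by
  rw [enorm2, ← Real.sqrt_sq (norm_nonneg x), ← Real.sqrt_mul n.cast_nonneg]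
  refine Real.sqrt_le_sqrt ?_
  calc ∑ i, x i ^ 2 ≤ ∑ _ : Fin n, ‖x‖ ^ 2 := Finset.sum_le_sum fun i _ => by
        rw [← sq_abs]
        exact pow_le_pow_left₀ (abs_nonneg _) (norm_le_pi_norm x i) 2
    _ = n * ‖x‖ ^ 2 := by simp

theorem enorm2_le_of_integral_scaleJK_ne_zero {n : ℕ} {φ ψ : Vec n → ℂ} {R : ℝ}
    (hφR : Function.support φ ⊆ Metric.closedBall 0 R)
    (hψR : Function.support ψ ⊆ Metric.closedBall 0 R) {j j' : ℤ} {k k' : IVec n}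
    (h : ∫ x, scaleJK φ j k x * conj (scaleJK ψ j' k' x) ≠ 0) :
    enorm2 (fun i => (2 : ℝ) ^ (-j) * k i - (2 : ℝ) ^ (-j') * k' i) ≤
      √n * R * ((2 : ℝ) ^ (-j) + (2 : ℝ) ^ (-j')) := by
  obtain ⟨x, hx⟩ : ∃ x, scaleJK φ j k x * conj (scaleJK ψ j' k' x) ≠ 0 := by
    by_contra! h0
    simp [h0] at h
  set a : Vec n := fun i => (2 : ℝ) ^ j * x i - k i
  set b : Vec n := fun i => (2 : ℝ) ^ j' * x i - k' i
  have ha : ‖a‖ ≤ R := mem_closedBall_zero_iff.1 (hφR fun h0 => hx (by simp [scaleJK, a, h0]))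
  have hb : ‖b‖ ≤ R := mem_closedBall_zero_iff.1 (hψR fun h0 => hx (by simp [scaleJK, b, h0]))
  have hab : (fun i => (2 : ℝ) ^ (-j) * k i - (2 : ℝ) ^ (-j') * k' i) =
      (2 : ℝ) ^ (-j') • b - (2 : ℝ) ^ (-j) • a := by
    funext i
    simp only [Pi.sub_apply, Pi.smul_apply, smul_eq_mul, a, b, zpow_neg]
    field_simp
    ring
  rw [hab]
  calc _ ≤ √n * ‖(2 : ℝ) ^ (-j') • b - (2 : ℝ) ^ (-j) • a‖ := enorm2_le_sqrt_mul_norm _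
    _ ≤ √n * ((2 : ℝ) ^ (-j') * R + (2 : ℝ) ^ (-j) * R) := by
        gcongr
        refine (norm_sub_le _ _).trans ?_
        rw [norm_smul, norm_smul, Real.norm_of_nonneg (by positivity),
          Real.norm_of_nonneg (by positivity)]
        gcongr
    _ = _ := by ring

theorem one_le_rpow_mul_rpow_div_add {S e D p : ℝ} (hS : 0 < S) (he : 0 ≤ e) (hp : 0 ≤ p)
    (heD : e ≤ D * S) : 1 ≤ (1 + D) ^ p * (S / (S + e)) ^ p := by
  have hD : 0 ≤ D := nonneg_of_mul_nonneg_left (he.trans heD) hS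
  rw [← Real.mul_rpow (by positivity) (by positivity)]
  refine Real.one_le_rpow ?_ hp
  rw [mul_div_assoc', le_div_iff₀ (by positivity)]
  nlinarith

theorem statement1_general (n : ℕ) (N : ℕ)
    (φ ψ : Vec n → ℂ)
    (hφs : ContDiff ℝ (⊤ : ℕ∞) φ) (hφc : HasCompactSupport φ)
    (hψs : ContDiff ℝ (⊤ : ℕ∞) ψ) (hψc : HasCompactSupport ψ)
    (hφm : ∀ α : Fin n → ℕ, (∑ i, α i) ≤ N →
      (∫ x : Vec n, ((∏ i, (x i) ^ (α i) : ℝ) : ℂ) * φ x) = 0)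
    (hψm : ∀ α : Fin n → ℕ, (∑ i, α i) ≤ N →
      (∫ x : Vec n, ((∏ i, (x i) ^ (α i) : ℝ) : ℂ) * ψ x) = 0) :
    ∃ C : ℝ, 0 < C ∧ ∀ (j j' : ℤ) (k k' : IVec n),
      ‖(∫ x : Vec n, scaleJK φ j k x * (starRingEnd ℂ) (scaleJK ψ j' k' x))‖ ≤
        C * (2:ℝ) ^ (-(((|j - j'| : ℤ) : ℝ)) * ((n : ℝ) / 2 + (N : ℝ))) *
          (((2:ℝ) ^ (-j) + (2:ℝ) ^ (-j')) /
              ((2:ℝ) ^ (-j) + (2:ℝ) ^ (-j') +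
                enorm2 (fun i => (2:ℝ) ^ (-j) * (k i : ℝ) - (2:ℝ) ^ (-j') * (k' i : ℝ)))) ^
            ((n : ℝ) + (N : ℝ)) := by
  have hφ : ContDiff ℝ (N + 1) φ := hφs.of_le (mod_cast le_top)
  have hψ : ContDiff ℝ (N + 1) ψ := hψs.of_le (mod_cast le_top)
  obtain ⟨C, hC, hdecay⟩ := exists_norm_integral_scaleJK_le hφ hφc hφm hψ hψc hψm
  obtain ⟨R, hR, hsupp⟩ :=
    (hφc.isCompact.union hψc.isCompact).isBounded.subset_closedBall_lt 0 0
  have hφR := (subset_tsupport φ).trans (Set.subset_union_left.trans hsupp)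
  have hψR := (subset_tsupport ψ).trans (Set.subset_union_right.trans hsupp)
  refine ⟨C * (1 + √n * R) ^ ((n : ℝ) + N), by positivity, fun j j' k k' => ?_⟩
  set v : Vec n := fun i => (2 : ℝ) ^ (-j) * k i - (2 : ℝ) ^ (-j') * k' i
  set S := (2 : ℝ) ^ (-j) + (2 : ℝ) ^ (-j')
  set decay := (2 : ℝ) ^ (-(((|j - j'| : ℤ) : ℝ)) * ((n : ℝ) / 2 + (N : ℝ)))
  by_cases h0 : ∫ x, scaleJK φ j k x * conj (scaleJK ψ j' k' x) = 0
  · have := enorm2_nonneg v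
    rw [h0, norm_zero]
    positivity
  have hloc := one_le_rpow_mul_rpow_div_add (by positivity) (enorm2_nonneg v)
    (by positivity : (0 : ℝ) ≤ n + N) (enorm2_le_of_integral_scaleJK_ne_zero hφR hψR h0)
  calc _ ≤ C * decay := hdecay j j' k k'
    _ ≤ C * decay * ((1 + √n * R) ^ ((n : ℝ) + N) * (S / (S + enorm2 v)) ^ ((n : ℝ) + N)) :=
      le_mul_of_one_le_right (by positivity) hloc
    _ = _ := by ring

/-- Lemma `le9`, Meyer: almost-orthogonality of two compactly supported
smooth families with `N` vanishing moments. -/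
theorem statement1 (n : ℕ) (hn : 1 ≤ n) (N : ℕ) (hN : 1 ≤ N)
    (φ ψ : Vec n → ℂ)
    (hφs : ContDiff ℝ (⊤ : ℕ∞) φ) (hφc : HasCompactSupport φ)
    (hψs : ContDiff ℝ (⊤ : ℕ∞) ψ) (hψc : HasCompactSupport ψ)
    (hφm : ∀ α : Fin n → ℕ, (∑ i, α i) ≤ N →
      (∫ x : Vec n, ((∏ i, (x i) ^ (α i) : ℝ) : ℂ) * φ x) = 0)
    (hψm : ∀ α : Fin n → ℕ, (∑ i, α i) ≤ N →
      (∫ x : Vec n, ((∏ i, (x i) ^ (α i) : ℝ) : ℂ) * ψ x) = 0) :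
    ∃ C : ℝ, 0 < C ∧ ∀ (j j' : ℤ) (k k' : IVec n),
      ‖(∫ x : Vec n, scaleJK φ j k x * (starRingEnd ℂ) (scaleJK ψ j' k' x))‖ ≤
        C * (2:ℝ) ^ (-(((|j - j'| : ℤ) : ℝ)) * ((n : ℝ) / 2 + (N : ℝ))) *
          (((2:ℝ) ^ (-j) + (2:ℝ) ^ (-j')) /
              ((2:ℝ) ^ (-j) + (2:ℝ) ^ (-j') +
                enorm2 (fun i => (2:ℝ) ^ (-j) * (k i : ℝ) - (2:ℝ) ^ (-j') * (k' i : ℝ)))) ^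
            ((n : ℝ) + (N : ℝ)) :=
  statement1_general n N φ ψ hφs hφc hψs hψc hφm hψm
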